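/- Let d be a prime, F = ℤ/dℤ, ω = exp(2πi/d), and let C ⊆ F^n be a linear subspace. For x, z, v ∈ F^n define the unit vector φ_{x,z,v} = |C|^{−1/2}·Σ_{w∈C} ω^{z·w} e_{w+v+x} in ℂ^{F^n}. Then for any transversal Γ_z of F^n/C^⊥ and any x, v ∈ F^n, (1/|C|)·Σ_{z∈Γ_z} |φ_{x,z,v}⟩⟨φ_{x,z,v}| = (1/|C|)·Σ_{w∈C} |e_{w+v+x}⟩⟨e_{w+v+x}| as linear operators on ℂ^{F^n}. -/

import Mathlib

/-!
Both sums of rank-one operators are the orthogonal projection onto the span of the `e_a` with `a`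
in the coset `C + v + x`. Writing `ψ k = ω ^ k.val` for the standard character of `ℤ/dℤ`, the
`(a, b)` entry of `Σ_{z ∈ Γ} |φ_{x,z,v}⟩⟨φ_{x,z,v}|` is `|C|⁻¹ Σ_{z ∈ Γ} ψ(z·(a - b))` when `a`
and `b` lie in that coset. As `a - b ∈ C`, the summand is constant on cosets of `C^⊥`, so
translating `z` by any `t` merely permutes the transversal; taking `t` with `ψ(t·(a - b)) ≠ 1`
shows that the sum vanishes unless `a = b`. For `a = b` it equals `|Γ|`, and `|Γ| = |C|` follows
by evaluating `Σ_{w ∈ C} Σ_{z ∈ Γ} ψ(z·w)` in both orders, using orthogonality of characters on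
`C` and on `Γ`.
-/

open scoped BigOperators

noncomputable section

/-- Dot product `x·y = Σᵢ xᵢ yᵢ` in `ℤ/dℤ`. -/
def dotp {d n : ℕ} (x y : Fin n → ZMod d) : ZMod d := ∑ i, x i * y i

/-- `C^⊥ = {y : ∀ x ∈ C, x·y = 0}`. -/
def dualSet {d n : ℕ} (C : Set (Fin n → ZMod d)) : Set (Fin n → ZMod d) :=
  {y | ∀ x ∈ C, dotp x y = 0}

/-- A transversal of `Fⁿ/C^⊥`: contains exactly one element of each coset of `C^⊥`. -/
def IsTransversal {d n : ℕ} (C : Set (Fin n → ZMod d)) (Γ : Set (Fin n → ZMod d)) : Prop :=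
  ∀ y : Fin n → ZMod d, ∃! g, g ∈ Γ ∧ y - g ∈ dualSet C

/-- `ω = exp(2πi/d)`. -/
def omg (d : ℕ) : ℂ := Complex.exp (2 * Real.pi * Complex.I / d)

/-- The standard basis vector `e_c` of `ℂ^{Fⁿ}`. -/
def stdv {d n : ℕ} (c : Fin n → ZMod d) : (Fin n → ZMod d) → ℂ :=
  fun a => if a = c then 1 else 0

/-- The CSS basis state `φ_{x,z,v} = |C|^{−1/2}·Σ_{w∈C} ω^{z·w} e_{w+v+x}`. -/
def phiv {d n : ℕ} (C : Submodule (ZMod d) (Fin n → ZMod d))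
    (x z v : Fin n → ZMod d) : (Fin n → ZMod d) → ℂ :=
  fun a => (1 / (Real.sqrt (Nat.card C) : ℂ)) *
    ∑ᶠ w ∈ (C : Set (Fin n → ZMod d)), omg d ^ (dotp z w).val * stdv (w + v + x) a

/-- The rank-one operator `|u⟩⟨u|`, as a matrix: `(|u⟩⟨u|)_{a,b} = u(a)·conj(u(b))`. -/
def outer {d n : ℕ} (u : (Fin n → ZMod d) → ℂ) :
    Matrix (Fin n → ZMod d) (Fin n → ZMod d) ℂ :=
  Matrix.vecMulVec u fun b => starRingEnd ℂ (u b)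

theorem finsum_mem_ite_eq' {α M : Type*} [AddCommMonoid M] [DecidableEq α] (s : Set α) (a : α)
    [Decidable (a ∈ s)] (f : α → M) :
    ∑ᶠ x ∈ s, (if x = a then f x else 0) = if a ∈ s then f a else 0 := by
  rw [finsum_eq_single _ a fun x hx => by simp [hx], if_pos rfl, finsum_eq_if]

lemma eq_add_add_iff_eq_sub {G : Type*} [AddCommGroup G] (c w v x : G) :
    c = w + v + x ↔ w = c - (v + x) := by
  rw [eq_sub_iff_add_eq, add_assoc, eq_comm]

theorem finsum_mem_add_right_of_transversal {G M : Type*} [AddCommGroup G] [AddCommMonoid M]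
    {H : AddSubgroup G} {Γ : Set G} (hΓ : ∀ y, ∃! g, g ∈ Γ ∧ y - g ∈ H) {f : G → M}
    (hf : ∀ z, ∀ h ∈ H, f (z + h) = f z) (t : G) :
    ∑ᶠ z ∈ Γ, f (z + t) = ∑ᶠ z ∈ Γ, f z := by
  choose rep hrep huniq using hΓ
  have eq_of_sub_mem {g g' : G} (hg : g ∈ Γ) (hg' : g' ∈ Γ) (h : g - g' ∈ H) : g = g' :=
    (huniq g g ⟨hg, by simp⟩).trans (huniq g g' ⟨hg', h⟩).symm
  refine finsum_mem_eq_of_bijOn (fun z => rep (z + t)) ⟨fun z _ => (hrep _).1, ?_, ?_⟩ ?_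
  · intro z₁ hz₁ z₂ hz₂ h
    refine eq_of_sub_mem hz₁ hz₂ ?_
    simpa [h] using H.sub_mem (hrep (z₁ + t)).2 (hrep (z₂ + t)).2
  · intro g hg
    refine ⟨rep (g - t), (hrep _).1, (huniq _ g ⟨hg, ?_⟩).symm⟩
    convert H.neg_mem (hrep (g - t)).2 using 1
    abel
  · intro z _
    simpa using hf (rep (z + t)) _ (hrep (z + t)).2

lemma ZMod.stdAddChar_eq_one_iff {d : ℕ} [NeZero d] {k : ZMod d} :
    ZMod.stdAddChar k = 1 ↔ k = 0 := by
  rw [← (ZMod.stdAddChar (N := d)).map_zero_eq_one, ZMod.injective_stdAddChar.eq_iff]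

lemma omg_pow_val {d : ℕ} [NeZero d] (k : ZMod d) : omg d ^ k.val = ZMod.stdAddChar k := by
  rw [omg, ← Complex.exp_nat_mul, ZMod.stdAddChar_apply, ZMod.toCircle_apply]
  ring_nf

section DotProduct

open Matrix
open scoped Classical

variable {d n : ℕ}

lemma dotp_eq_dotProduct (x y : Fin n → ZMod d) : dotp x y = x ⬝ᵥ y := rfl

lemma mem_dualSet_iff {C : Set (Fin n → ZMod d)} {y : Fin n → ZMod d} :
    y ∈ dualSet C ↔ ∀ x ∈ C, x ⬝ᵥ y = 0 := Iff.rfl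

def dualAddSubgroup (C : Set (Fin n → ZMod d)) : AddSubgroup (Fin n → ZMod d) where
  carrier := dualSet C
  add_mem' hy hy' x hx := by
    rw [mem_dualSet_iff] at hy hy'
    rw [dotp_eq_dotProduct, dotProduct_add, hy x hx, hy' x hx, add_zero]
  zero_mem' x _ := dotProduct_zero x
  neg_mem' hy x hx := by
    rw [dotp_eq_dotProduct, dotProduct_neg, neg_eq_zero]
    exact hy x hx

variable {C : Submodule (ZMod d) (Fin n → ZMod d)} {Γ : Set (Fin n → ZMod d)}

lemma isTransversal_iff : IsTransversal (C : Set (Fin n → ZMod d)) Γ ↔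
    ∀ y, ∃! g, g ∈ Γ ∧ y - g ∈ dualAddSubgroup (C : Set (Fin n → ZMod d)) := Iff.rfl

variable [NeZero d]

theorem finsum_mem_stdAddChar_dotProduct (z : Fin n → ZMod d) :
    ∑ᶠ w ∈ (C : Set (Fin n → ZMod d)), ZMod.stdAddChar (z ⬝ᵥ w) =
      if z ∈ dualSet (C : Set (Fin n → ZMod d)) then (Nat.card C : ℂ) else 0 := by
  let ψ : AddChar C ℂ := ZMod.stdAddChar.compAddMonoidHom
    (AddMonoidHom.mk' (fun w : C => z ⬝ᵥ (w : Fin n → ZMod d)) fun _ _ => dotProduct_add ..)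
  have hψ : ψ = 0 ↔ z ∈ dualSet (C : Set (Fin n → ZMod d)) := by
    simp [ψ, AddChar.eq_zero_iff, mem_dualSet_iff, ZMod.stdAddChar_eq_one_iff, dotProduct_comm]
  rw [← finsum_subtype_eq_finsum_cond, finsum_eq_sum_of_fintype, Nat.card_eq_fintype_card]
  exact ψ.sum_eq_ite.trans (if_congr hψ rfl rfl)

theorem IsTransversal.finsum_mem_stdAddChar_dotProduct_of_ne_zero
    (hΓ : IsTransversal (C : Set (Fin n → ZMod d)) Γ) {w : Fin n → ZMod d} (hwC : w ∈ C)
    (hw : w ≠ 0) :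
    ∑ᶠ z ∈ Γ, ZMod.stdAddChar (z ⬝ᵥ w) = 0 := by
  obtain ⟨i, hi⟩ : ∃ i, w i ≠ 0 := Function.ne_iff.mp hw
  have hinv : ∀ z, ∀ h ∈ dualAddSubgroup (C : Set (Fin n → ZMod d)),
      ZMod.stdAddChar ((z + h) ⬝ᵥ w) = ZMod.stdAddChar (z ⬝ᵥ w) := by
    intro z h hh
    rw [add_dotProduct, dotProduct_comm h, show w ⬝ᵥ h = 0 from hh w hwC, add_zero]
  have hshift := finsum_mem_add_right_of_transversal (isTransversal_iff.mp hΓ)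
    (f := fun z => ZMod.stdAddChar (z ⬝ᵥ w)) hinv (Pi.single i 1)
  simp only [add_dotProduct, single_dotProduct, one_mul, AddChar.map_add_eq_mul] at hshift
  rw [← finsum_mem_mul] at hshift
  exact eq_zero_of_mul_eq_self_right (ZMod.stdAddChar_eq_one_iff.not.mpr hi) hshift

theorem IsTransversal.ncard_eq_card (hΓ : IsTransversal (C : Set (Fin n → ZMod d)) Γ) :
    Γ.ncard = Nat.card C := by
  obtain ⟨g₀, ⟨hg₀Γ, hg₀⟩, huniq⟩ := hΓ 0
  have hneg (y : Fin n → ZMod d) :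
      0 - y ∈ dualSet (C : Set (Fin n → ZMod d)) ↔ y ∈ dualSet C :=
    zero_sub y ▸ (dualAddSubgroup _).neg_mem_iff
  have hdual : ∀ z ∈ Γ, z ∈ dualSet (C : Set (Fin n → ZMod d)) ↔ z = g₀ := fun z hz =>
    ⟨fun h => huniq z ⟨hz, (hneg z).mpr h⟩, fun h => h ▸ (hneg g₀).mp hg₀⟩
  have hC : ∀ w ∈ (C : Set (Fin n → ZMod d)), ∑ᶠ z ∈ Γ, ZMod.stdAddChar (z ⬝ᵥ w) =
      if w = 0 then (Γ.ncard : ℂ) else 0 := by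
    intro w hw
    split_ifs with h
    · simp [h, finsum_mem_eq_toFinset_sum, Set.ncard_eq_toFinset_card']
    · exact hΓ.finsum_mem_stdAddChar_dotProduct_of_ne_zero hw h
  have hΓ' : ∀ z ∈ Γ, ∑ᶠ w ∈ (C : Set (Fin n → ZMod d)), ZMod.stdAddChar (z ⬝ᵥ w) =
      if z = g₀ then (Nat.card C : ℂ) else 0 := fun z hz =>
    (finsum_mem_stdAddChar_dotProduct z).trans (if_congr (hdual z hz) rfl rfl)
  have hcomm := finsum_mem_comm (fun w z => ZMod.stdAddChar (z ⬝ᵥ w))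
    (Set.toFinite (C : Set (Fin n → ZMod d))) (Set.toFinite Γ)
  rw [finsum_mem_congr rfl hC, finsum_mem_congr rfl hΓ', finsum_mem_eq_toFinset_sum,
    finsum_mem_eq_toFinset_sum, Finset.sum_ite_eq', Finset.sum_ite_eq', if_pos (by simp),
    if_pos (by simpa using hg₀Γ)] at hcomm
  exact_mod_cast hcomm

theorem IsTransversal.finsum_mem_stdAddChar_dotProduct
    (hΓ : IsTransversal (C : Set (Fin n → ZMod d)) Γ) {w : Fin n → ZMod d} (hwC : w ∈ C) :
    ∑ᶠ z ∈ Γ, ZMod.stdAddChar (z ⬝ᵥ w) = if w = 0 then (Nat.card C : ℂ) else 0 := by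
  split_ifs with hw
  · rw [hw, ← hΓ.ncard_eq_card]
    simp [finsum_mem_eq_toFinset_sum, Set.ncard_eq_toFinset_card']
  · exact hΓ.finsum_mem_stdAddChar_dotProduct_of_ne_zero hwC hw

lemma phiv_apply (x z v a : Fin n → ZMod d) :
    phiv C x z v a = if a - (v + x) ∈ C then
      ZMod.stdAddChar (z ⬝ᵥ (a - (v + x))) / Real.sqrt (Nat.card C) else 0 := by
  simp only [phiv, stdv, omg_pow_val, dotp_eq_dotProduct, mul_ite, mul_one, mul_zero,
    eq_add_add_iff_eq_sub]
  rw [finsum_mem_ite_eq', SetLike.mem_coe, mul_ite, mul_zero, one_div_mul_eq_div]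

lemma outer_phiv_apply (x z v a b : Fin n → ZMod d) :
    outer (phiv C x z v) a b = if a - (v + x) ∈ C ∧ b - (v + x) ∈ C then
      ZMod.stdAddChar (z ⬝ᵥ (a - b)) / Nat.card C else 0 := by
  rw [outer, vecMulVec_apply, phiv_apply, phiv_apply]
  by_cases ha : a - (v + x) ∈ C
  · by_cases hb : b - (v + x) ∈ C
    · rw [if_pos ha, if_pos hb, if_pos ⟨ha, hb⟩, map_div₀, Complex.conj_ofReal,
        ← AddChar.map_neg_eq_conj, div_mul_div_comm, ← AddChar.map_add_eq_mul,
        ← Complex.ofReal_mul, Real.mul_self_sqrt (Nat.cast_nonneg _), ← dotProduct_neg,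
        ← dotProduct_add, Complex.ofReal_natCast]
      congr 3
      abel
    · simp [hb]
  · simp [ha]

theorem finsum_mem_outer_phiv_eq_diagonal (hΓ : IsTransversal (C : Set (Fin n → ZMod d)) Γ)
    (x v : Fin n → ZMod d) :
    ∑ᶠ z ∈ Γ, outer (phiv C x z v) = diagonal fun a => if a - (v + x) ∈ C then 1 else 0 := by
  ext a b
  rw [finsum_mem_eq_toFinset_sum, Matrix.sum_apply, ← finsum_mem_eq_toFinset_sum, diagonal_apply]
  simp_rw [outer_phiv_apply]
  by_cases h : a - (v + x) ∈ C ∧ b - (v + x) ∈ C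
  · have hab : a - b ∈ C := by simpa using C.sub_mem h.1 h.2
    simp only [if_pos h, div_eq_inv_mul]
    rw [← mul_finsum_mem, hΓ.finsum_mem_stdAddChar_dotProduct hab]
    by_cases hab' : a = b
    · simp [hab', h.2]
    · simp [sub_eq_zero, hab']
  · simp only [if_neg h, finsum_zero]
    split_ifs with hab ha
    · exact absurd ⟨ha, hab ▸ ha⟩ h
    all_goals rfl

theorem finsum_mem_outer_stdv_eq_diagonal (x v : Fin n → ZMod d) :
    ∑ᶠ w ∈ (C : Set (Fin n → ZMod d)), outer (stdv (w + v + x)) =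
      diagonal fun a => if a - (v + x) ∈ C then 1 else 0 := by
  ext a b
  rw [finsum_mem_eq_toFinset_sum, Matrix.sum_apply, ← finsum_mem_eq_toFinset_sum, diagonal_apply]
  simp only [outer, vecMulVec_apply, stdv, apply_ite (starRingEnd ℂ), map_one, map_zero, mul_ite,
    ite_mul, one_mul, zero_mul, mul_zero, eq_add_add_iff_eq_sub]
  rw [finsum_mem_ite_eq', SetLike.mem_coe]
  by_cases hab : a = b
  · simp [hab]
  · simp [Ne.symm hab, hab]

end DotProduct

theorem stmt_15_general (d : ℕ) [NeZero d] (n : ℕ)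
    (C : Submodule (ZMod d) (Fin n → ZMod d)) (Γz : Set (Fin n → ZMod d))
    (hΓ : IsTransversal (C : Set (Fin n → ZMod d)) Γz) (x v : Fin n → ZMod d) :
    ((1 : ℂ) / (Nat.card C : ℂ)) • (∑ᶠ z ∈ Γz, outer (phiv C x z v)) =
      ((1 : ℂ) / (Nat.card C : ℂ)) •
        (∑ᶠ w ∈ (C : Set (Fin n → ZMod d)), outer (stdv (w + v + x))) := by
  rw [finsum_mem_outer_phiv_eq_diagonal hΓ, finsum_mem_outer_stdv_eq_diagonal]

theorem stmt_15 (d : ℕ) [NeZero d] (hd : d.Prime) (n : ℕ)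
    (C : Submodule (ZMod d) (Fin n → ZMod d)) (Γz : Set (Fin n → ZMod d))
    (hΓ : IsTransversal (C : Set (Fin n → ZMod d)) Γz) (x v : Fin n → ZMod d) :
    ((1 : ℂ) / (Nat.card C : ℂ)) • (∑ᶠ z ∈ Γz, outer (phiv C x z v)) =
      ((1 : ℂ) / (Nat.card C : ℂ)) •
        (∑ᶠ w ∈ (C : Set (Fin n → ZMod d)), outer (stdv (w + v + x))) :=
  stmt_15_general d n C Γz hΓ x v

end
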